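/- Let X be a finite subset of ℝ^d that spans ℝ^d, let δ ∈ (0, 0.1), let t ≥ 1 be an integer, and let Δ̂ : X → [0,1] satisfy min_{x∈X} Δ̂_x = 0. Then the feasible set of OP(t, Δ̂) is nonempty, and every solution p of OP(t, Δ̂) satisfies Σ_{x∈X} p_x Δ̂_x ≤ (d·β_t + 1)/√t. -/

import Mathlib

open Finset

/-- `Smat X p` is the matrix `S(p) = ∑_{x ∈ X} p_x · x xᵀ`. -/
noncomputable def Smat {d : ℕ} (X : Finset (Fin d → ℝ)) (p : (Fin d → ℝ) → ℝ) :
    Matrix (Fin d) (Fin d) ℝ :=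
  ∑ x ∈ X, p x • Matrix.vecMulVec x x

/-- `p` is a probability distribution on the finite set `X`. -/
def IsDistOn {d : ℕ} (X : Finset (Fin d → ℝ)) (p : (Fin d → ℝ) → ℝ) : Prop :=
  (∀ x ∈ X, 0 ≤ p x) ∧ ∑ x ∈ X, p x = 1

/-- `β_t = 2^15 · log(t · |X| / δ)`. -/
noncomputable def betaParam (n : ℕ) (δ : ℝ) (t : ℕ) : ℝ :=
  2 ^ 15 * Real.log ((t : ℝ) * n / δ)

/-- `p` is a feasible point of the optimization problem `OP(t, Δ̂)`. -/
def FeasibleOP {d : ℕ} (X : Finset (Fin d → ℝ)) (δ : ℝ) (t : ℕ)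
    (Δ : (Fin d → ℝ) → ℝ) (p : (Fin d → ℝ) → ℝ) : Prop :=
  IsDistOn X p ∧ IsUnit (Smat X p) ∧
    ∀ x ∈ X, dotProduct x ((Smat X p)⁻¹.mulVec x) ≤
      (t : ℝ) * Δ x ^ 2 / betaParam X.card δ t + 4 * d

/-- `p` is a solution (optimal feasible point) of the optimization problem `OP(t, Δ̂)`. -/
def IsOPSolution {d : ℕ} (X : Finset (Fin d → ℝ)) (δ : ℝ) (t : ℕ)
    (Δ : (Fin d → ℝ) → ℝ) (p : (Fin d → ℝ) → ℝ) : Prop :=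
  FeasibleOP X δ t Δ p ∧
    ∀ q : (Fin d → ℝ) → ℝ, FeasibleOP X δ t Δ q →
      ∑ x ∈ X, p x * Δ x ≤ ∑ x ∈ X, q x * Δ x

/-!
Rescale every `x ∈ X` to `u_x = (ε / m_x) • x`, where `m_x = √(Δ̂_x² + ε²)`, and take a design `p`
maximising `det S(p)` for the `u_x`. Moving mass `ε` from `p` towards `u_x` multiplies the determinant
by `(1 - ε)^d (1 + ε/(1 - ε) · u_xᵀ S⁻¹ u_x)`, so maximality and `ε → 0` give the Kiefer–Wolfowitz
bound `u_xᵀ S⁻¹ u_x ≤ d`. The weights `w_x = (ε / m_x)² p_x` have total mass at most one and `S(w)` is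
the design matrix of `p`, so `xᵀ S(w)⁻¹ x ≤ d (Δ̂_x² + ε²) / ε²`, while `∑ w_x Δ̂_x ≤ ε` because
`ε Δ̂_x ≤ Δ̂_x² + ε²`. Putting the missing mass on a point with `Δ̂ = 0` leaves the objective unchanged
and only increases `S`. For `ε² = (d β_t + 1) / t` the resulting distribution is feasible for
`OP(t, Δ̂)` and `ε ≤ (d β_t + 1) / √t`.
-/

open Matrix

namespace Matrix

variable {n : Type*} [Fintype n]

theorem IsHermitian.dotProduct_mulVec_comm {M : Matrix n n ℝ} (hM : M.IsHermitian)
    (x y : n → ℝ) : x ⬝ᵥ M *ᵥ y = y ⬝ᵥ M *ᵥ x := by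
  rw [dotProduct_mulVec, ← mulVec_transpose, ← conjTranspose_eq_transpose_of_trivial, hM.eq,
    dotProduct_comm]

theorem smul_dotProduct_mulVec_smul (c : ℝ) (u : n → ℝ) (M : Matrix n n ℝ) :
    (c • u) ⬝ᵥ M *ᵥ (c • u) = c ^ 2 * (u ⬝ᵥ M *ᵥ u) := by
  rw [smul_dotProduct, mulVec_smul, dotProduct_smul, smul_eq_mul, smul_eq_mul]
  ring

theorem dotProduct_vecMulVec_self_mulVec (u y : n → ℝ) :
    y ⬝ᵥ vecMulVec u u *ᵥ y = (u ⬝ᵥ y) ^ 2 := by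
  rw [vecMulVec_mulVec, op_smul_eq_smul, dotProduct_smul, smul_eq_mul, dotProduct_comm, sq]

theorem eq_zero_of_span_eq_top_of_forall_dotProduct_eq_zero {S : Set (n → ℝ)}
    (hS : Submodule.span ℝ S = ⊤) {y : n → ℝ} (hy : ∀ u ∈ S, u ⬝ᵥ y = 0) : y = 0 := by
  have h : (dotProductBilin ℝ ℝ).flip y = 0 := LinearMap.ext_on hS fun u hu => by simpa using hy u hu
  simpa using congr($h y)

variable [DecidableEq n]

theorem PosDef.mulVec_inv_mulVec {M : Matrix n n ℝ} (hM : M.PosDef) (x : n → ℝ) :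
    M *ᵥ (M⁻¹ *ᵥ x) = x := by
  rw [mulVec_mulVec, mul_nonsing_inv _ hM.det_pos.ne'.isUnit, one_mulVec]

/-- One half of the variational formula `xᵀ M⁻¹ x = max_y (2 yᵀ x - yᵀ M y)`. -/
theorem PosDef.two_mul_dotProduct_sub_le {M : Matrix n n ℝ} (hM : M.PosDef) (x y : n → ℝ) :
    2 * (y ⬝ᵥ x) - y ⬝ᵥ M *ᵥ y ≤ x ⬝ᵥ M⁻¹ *ᵥ x := by
  set w := M⁻¹ *ᵥ x
  have hMw : M *ᵥ w = x := hM.mulVec_inv_mulVec x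
  have hsq : 0 ≤ (y - w) ⬝ᵥ M *ᵥ (y - w) := by
    simpa using hM.posSemidef.dotProduct_mulVec_nonneg (y - w)
  have hwy : w ⬝ᵥ M *ᵥ y = y ⬝ᵥ x := by rw [hM.isHermitian.dotProduct_mulVec_comm, hMw]
  simp only [mulVec_sub, dotProduct_sub, sub_dotProduct, hMw, hwy] at hsq
  linarith [dotProduct_comm w x]

theorem PosDef.dotProduct_inv_add_mulVec_le {B C : Matrix n n ℝ} (hB : B.PosDef)
    (hC : C.PosSemidef) (x : n → ℝ) : x ⬝ᵥ (B + C)⁻¹ *ᵥ x ≤ x ⬝ᵥ B⁻¹ *ᵥ x := by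
  set y := (B + C)⁻¹ *ᵥ x
  have hy : (B + C) *ᵥ y = x := (hB.add_posSemidef hC).mulVec_inv_mulVec x
  have hCy : 0 ≤ y ⬝ᵥ C *ᵥ y := by simpa using hC.dotProduct_mulVec_nonneg y
  have hyx : y ⬝ᵥ x = y ⬝ᵥ B *ᵥ y + y ⬝ᵥ C *ᵥ y := by rw [← hy, add_mulVec, dotProduct_add]
  rw [dotProduct_comm]
  linarith [hB.two_mul_dotProduct_sub_le x y]

theorem det_add_smul_vecMulVec {A : Matrix n n ℝ} (hA : IsUnit A.det) (c : ℝ) (u v : n → ℝ) :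
    (A + c • vecMulVec u v).det = A.det * (1 + c * (v ⬝ᵥ A⁻¹ *ᵥ u)) := by
  rw [← smul_vecMulVec, vecMulVec_eq Unit, det_add_replicateCol_mul_replicateRow hA,
    det_unique (n := Unit), add_apply, one_apply_eq, Matrix.mul_assoc, ← replicateCol_mulVec,
    replicateRow_mul_replicateCol_apply, mulVec_smul, dotProduct_smul, smul_eq_mul]

theorem det_smul_add_smul_vecMulVec {A : Matrix n n ℝ} (hA : IsUnit A.det) {a : ℝ} (ha : a ≠ 0)
    (b : ℝ) (v : n → ℝ) :
    (a • A + b • vecMulVec v v).det =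
      a ^ Fintype.card n * A.det * (1 + b / a * (v ⬝ᵥ A⁻¹ *ᵥ v)) := by
  have : a • A + b • vecMulVec v v = a • (A + (b / a) • vecMulVec v v) := by
    rw [smul_add, smul_smul, mul_div_cancel₀ b ha]
  rw [this, det_smul, det_add_smul_vecMulVec hA, mul_assoc]

end Matrix

theorem Submodule.span_image_smul_of_ne_zero {ι K M : Type*} [DivisionRing K] [AddCommGroup M]
    [Module K M] (s : Set ι) (v : ι → M) {c : ι → K} (hc : ∀ i ∈ s, c i ≠ 0) :
    span K ((fun i => c i • v i) '' s) = span K (v '' s) := by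
  refine le_antisymm (span_le.2 ?_) (span_le.2 ?_) <;> rintro _ ⟨i, hi, rfl⟩
  · exact smul_mem _ _ (subset_span ⟨i, hi, rfl⟩)
  · simpa [smul_smul, inv_mul_cancel₀ (hc i hi)] using
      smul_mem _ (c i)⁻¹ (subset_span (Set.mem_image_of_mem (fun i => c i • v i) hi))

open Filter Topology in
theorem le_of_forall_one_sub_pow_mul_le_one {k : ℕ} {q : ℝ}
    (h : ∀ ε ∈ Set.Ioo (0 : ℝ) 1, (1 - ε) ^ k * (1 + ε / (1 - ε) * q) ≤ 1) : q ≤ k := by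
  rcases le_or_gt q 0 with hq | hq
  · exact hq.trans k.cast_nonneg
  have hlin : ∀ ε ∈ Set.Ioo (0 : ℝ) 1, q - k ≤ k * (q - 1) * ε := by
    rintro ε ⟨hε0, hε1⟩
    have hbern : 1 - k * ε ≤ (1 - ε) ^ k := by
      simpa [sub_eq_add_neg] using one_add_mul_le_pow (a := -ε) (by linarith) k
    have h1ε : 0 < 1 - ε := by linarith
    have hε := h ε ⟨hε0, hε1⟩
    rw [div_mul_eq_mul_div, one_add_div h1ε.ne', mul_div_assoc', div_le_one h1ε] at hε
    have : (1 - k * ε) * (1 - ε + ε * q) ≤ 1 - ε :=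
      (mul_le_mul_of_nonneg_right hbern (by nlinarith)).trans hε
    nlinarith
  have hlim : Tendsto (fun ε : ℝ => k * (q - 1) * ε) (𝓝[>] 0) (𝓝 0) :=
    tendsto_nhdsWithin_of_tendsto_nhds (by simpa using (continuous_const_mul (k * (q - 1) : ℝ)).tendsto 0)
  have hev : ∀ᶠ ε in 𝓝[>] (0 : ℝ), q - k ≤ k * (q - 1) * ε := by
    filter_upwards [Ioo_mem_nhdsGT one_pos] with ε hε using hlin ε hε
  exact sub_nonpos.mp (ge_of_tendsto hlim hev)

noncomputable def designMatrix {ι n : Type*} (s : Finset ι) (v : ι → n → ℝ) (p : ι → ℝ) :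
    Matrix n n ℝ :=
  ∑ i ∈ s, p i • vecMulVec (v i) (v i)

section DesignMatrix

variable {ι n : Type*} (s : Finset ι) (v : ι → n → ℝ) (p : ι → ℝ)

theorem designMatrix_add (q : ι → ℝ) :
    designMatrix s v (p + q) = designMatrix s v p + designMatrix s v q := by
  simp only [designMatrix, Pi.add_apply, add_smul, sum_add_distrib]

theorem designMatrix_smul (c : ℝ) : designMatrix s v (c • p) = c • designMatrix s v p := by
  simp only [designMatrix, Pi.smul_apply, smul_eq_mul, mul_smul, smul_sum]

theorem designMatrix_single [DecidableEq ι] {i : ι} (hi : i ∈ s) (a : ℝ) :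
    designMatrix s v (Pi.single i a) = a • vecMulVec (v i) (v i) := by
  rw [designMatrix, sum_eq_single_of_mem i hi fun j _ hj => by simp [hj], Pi.single_eq_same]

theorem designMatrix_smul_vec (c : ι → ℝ) :
    designMatrix s (fun i => c i • v i) p = designMatrix s v (fun i => c i ^ 2 * p i) := by
  refine sum_congr rfl fun i _ => ?_
  rw [smul_vecMulVec, vecMulVec_smul, smul_smul, smul_smul]
  ring_nf

variable [Fintype n]

theorem dotProduct_designMatrix_mulVec (y : n → ℝ) :
    y ⬝ᵥ designMatrix s v p *ᵥ y = ∑ i ∈ s, p i * (v i ⬝ᵥ y) ^ 2 := by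
  simp only [designMatrix, sum_mulVec, dotProduct_sum, smul_mulVec, dotProduct_smul,
    smul_eq_mul, dotProduct_vecMulVec_self_mulVec]

theorem posSemidef_designMatrix (hp : ∀ i ∈ s, 0 ≤ p i) : (designMatrix s v p).PosSemidef :=
  posSemidef_sum s fun i hi => (posSemidef_vecMulVec_self_star (v i)).smul (hp i hi)

theorem posDef_designMatrix (hp : ∀ i ∈ s, 0 < p i) (hv : Submodule.span ℝ (v '' s) = ⊤) :
    (designMatrix s v p).PosDef := by
  refine .of_dotProduct_mulVec_pos (posSemidef_designMatrix s v p fun i hi => (hp i hi).le).1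
    fun y hy => ?_
  rw [star_trivial, dotProduct_designMatrix_mulVec]
  obtain ⟨i, hi, hiy⟩ : ∃ i ∈ s, v i ⬝ᵥ y ≠ 0 := by
    by_contra! h
    exact hy (eq_zero_of_span_eq_top_of_forall_dotProduct_eq_zero hv (by simpa using h))
  exact sum_pos' (fun j hj => by have := hp j hj; positivity)
    ⟨i, hi, by have := hp i hi; positivity⟩

end DesignMatrix

theorem exists_gOptimalDesign_univ {ι n : Type*} [Fintype ι] [Nonempty ι] [DecidableEq ι]
    [Fintype n] [DecidableEq n] (v : ι → n → ℝ) (hv : Submodule.span ℝ (Set.range v) = ⊤) :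
    ∃ p ∈ stdSimplex ℝ ι, (designMatrix univ v p).PosDef ∧
      ∀ i, v i ⬝ᵥ (designMatrix univ v p)⁻¹ *ᵥ v i ≤ Fintype.card n := by
  have huniform : (fun _ => (Fintype.card ι : ℝ)⁻¹) ∈ stdSimplex ℝ ι :=
    ⟨fun _ => by positivity, by simp [card_univ]⟩
  have hcont : Continuous fun p => (designMatrix univ v p).det :=
    (continuous_finsetSum _ fun i _ => (continuous_apply i).smul continuous_const).matrix_det
  obtain ⟨p, hp, hmax⟩ :=
    (isCompact_stdSimplex ℝ ι).exists_isMaxOn ⟨_, huniform⟩ hcont.continuousOn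
  have hpos : (designMatrix univ v p).PosDef := by
    refine (posSemidef_designMatrix _ _ _ fun i _ => hp.1 i).posDef_iff_det_ne_zero.mpr ?_
    have := posDef_designMatrix univ v _
      (fun _ _ => inv_pos.mpr (Nat.cast_pos.mpr (Fintype.card_pos (α := ι))))
      (by rwa [coe_univ, Set.image_univ])
    exact (this.det_pos.trans_le (hmax huniform)).ne'
  refine ⟨p, hp, hpos, fun i => le_of_forall_one_sub_pow_mul_le_one fun ε ⟨hε0, hε1⟩ => ?_⟩
  have hmem : (1 - ε) • p + ε • Pi.single i 1 ∈ stdSimplex ℝ ι :=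
    convex_stdSimplex ℝ ι hp (single_mem_stdSimplex ℝ i) (by linarith) hε0.le (by ring)
  have hdet : (designMatrix univ v _).det ≤ _ := hmax hmem
  rw [designMatrix_add, designMatrix_smul, designMatrix_smul,
    designMatrix_single univ v (mem_univ i), one_smul,
    det_smul_add_smul_vecMulVec hpos.det_pos.ne'.isUnit (by linarith), mul_right_comm] at hdet
  exact (mul_le_iff_le_one_left hpos.det_pos).mp hdet

theorem exists_gOptimalDesign {ι n : Type*} [DecidableEq ι] [Fintype n] [DecidableEq n]
    {s : Finset ι} (hs : s.Nonempty) (v : ι → n → ℝ) (hv : Submodule.span ℝ (v '' s) = ⊤) :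
    ∃ p : ι → ℝ, (∀ i ∈ s, 0 ≤ p i) ∧ ∑ i ∈ s, p i = 1 ∧ (designMatrix s v p).PosDef ∧
      ∀ i ∈ s, v i ⬝ᵥ (designMatrix s v p)⁻¹ *ᵥ v i ≤ Fintype.card n := by
  have : Nonempty s := hs.coe_sort
  obtain ⟨p, hp, hpos, hbound⟩ :=
    exists_gOptimalDesign_univ (fun i : s => v i) (by rw [Set.image_eq_range] at hv; exact hv)
  set q : ι → ℝ := fun i => if h : i ∈ s then p ⟨i, h⟩ else 0
  have hS : designMatrix s v q = designMatrix univ (fun i : s => v i) p := by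
    rw [designMatrix, ← sum_coe_sort s]
    exact sum_congr rfl fun i _ => by simp [q]
  refine ⟨q, fun i hi => ?_, ?_, hS ▸ hpos, fun i hi => ?_⟩
  · simpa [q, hi] using hp.1 ⟨i, hi⟩
  · rw [← sum_coe_sort s, ← hp.2]
    exact sum_congr rfl fun i _ => by simp [q]
  · simpa [hS] using hbound ⟨i, hi⟩

theorem betaParam_pos {n : ℕ} {δ : ℝ} {t : ℕ} (hn : 1 ≤ n) (hδ0 : 0 < δ) (hδ1 : δ < 1)
    (ht : 1 ≤ t) : 0 < betaParam n δ t := by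
  have htn : (1 : ℝ) ≤ t * n := by exact_mod_cast Nat.one_le_iff_ne_zero.mpr (by positivity)
  exact mul_pos (by norm_num) (Real.log_pos ((one_lt_div hδ0).2 (hδ1.trans_le htn)))

theorem Smat_eq_designMatrix {d : ℕ} (X : Finset (Fin d → ℝ)) (p : (Fin d → ℝ) → ℝ) :
    Smat X p = designMatrix X id p :=
  rfl

theorem exists_subprob_Smat_inv_le {d : ℕ} {X : Finset (Fin d → ℝ)} (hX : X.Nonempty)
    (hspan : Submodule.span ℝ (X : Set (Fin d → ℝ)) = ⊤) (Δ : (Fin d → ℝ) → ℝ) {ε : ℝ}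
    (hε : 0 < ε) :
    ∃ w : (Fin d → ℝ) → ℝ, (∀ x ∈ X, 0 ≤ w x) ∧ ∑ x ∈ X, w x ≤ 1 ∧ (Smat X w).PosDef ∧
      (∀ x ∈ X, x ⬝ᵥ (Smat X w)⁻¹ *ᵥ x ≤ d * (Δ x ^ 2 + ε ^ 2) / ε ^ 2) ∧
      ∑ x ∈ X, w x * Δ x ≤ ε := by
  classical
  set m : (Fin d → ℝ) → ℝ := fun x => √(Δ x ^ 2 + ε ^ 2)
  have hm : ∀ x, 0 < m x := fun x => Real.sqrt_pos.2 (by positivity)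
  have hm2 : ∀ x, m x ^ 2 = Δ x ^ 2 + ε ^ 2 := fun x => Real.sq_sqrt (by positivity)
  have hc : ∀ x, ε / m x ≠ 0 := fun x => (div_pos hε (hm x)).ne'
  obtain ⟨p, hp0, hp1, hpos, hbound⟩ := exists_gOptimalDesign hX (fun x => (ε / m x) • x)
    (by rw [Submodule.span_image_smul_of_ne_zero _ _ fun x _ => hc x, Set.image_id']; exact hspan)
  set w : (Fin d → ℝ) → ℝ := fun x => (ε / m x) ^ 2 * p x
  have hw : Smat X w = designMatrix X (fun x => (ε / m x) • x) p :=
    (designMatrix_smul_vec X id p _).symm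
  have hratio : ∀ x, (ε / m x) ^ 2 = ε ^ 2 / (Δ x ^ 2 + ε ^ 2) := fun x => by rw [div_pow, hm2]
  have hwp : ∀ x ∈ X, w x ≤ p x := fun x hx => by
    refine mul_le_of_le_one_left (hp0 x hx) ?_
    rw [hratio, div_le_one (by positivity)]
    nlinarith
  refine ⟨w, fun x hx => by positivity [hp0 x hx], (sum_le_sum hwp).trans hp1.le, hw ▸ hpos,
    fun x hx => ?_, ?_⟩
  · have hx' : x = (m x / ε) • (ε / m x) • x := by
      rw [smul_smul, div_mul_div_cancel₀ hε.ne', div_self (hm x).ne', one_smul]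
    calc x ⬝ᵥ (Smat X w)⁻¹ *ᵥ x
        = (m x / ε) ^ 2 * ((ε / m x) • x ⬝ᵥ (Smat X w)⁻¹ *ᵥ (ε / m x) • x) := by
          conv_lhs => rw [hx']
          exact smul_dotProduct_mulVec_smul _ _ _
      _ ≤ (m x / ε) ^ 2 * d := by gcongr; simpa [hw] using hbound x hx
      _ = d * (Δ x ^ 2 + ε ^ 2) / ε ^ 2 := by rw [div_pow, hm2]; ring
  · calc ∑ x ∈ X, w x * Δ x ≤ ∑ x ∈ X, ε * p x := sum_le_sum fun x hx => ?_
      _ = ε := by rw [← mul_sum, hp1, mul_one]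
    have hgap : ε ^ 2 / (Δ x ^ 2 + ε ^ 2) * Δ x ≤ ε := by
      rw [div_mul_eq_mul_div, div_le_iff₀ (by positivity)]
      nlinarith [sq_nonneg (Δ x - ε)]
    calc w x * Δ x = p x * (ε ^ 2 / (Δ x ^ 2 + ε ^ 2) * Δ x) := by simp only [w, hratio]; ring
      _ ≤ p x * ε := mul_le_mul_of_nonneg_left hgap (hp0 x hx)
      _ = ε * p x := mul_comm _ _

theorem exists_isDistOn_Smat_inv_le {d : ℕ} {X : Finset (Fin d → ℝ)}
    (hspan : Submodule.span ℝ (X : Set (Fin d → ℝ)) = ⊤) {Δ : (Fin d → ℝ) → ℝ} {x₀ : Fin d → ℝ}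
    (hx₀ : x₀ ∈ X) (hΔx₀ : Δ x₀ = 0) {ε : ℝ} (hε : 0 < ε) :
    ∃ q : (Fin d → ℝ) → ℝ, IsDistOn X q ∧ IsUnit (Smat X q) ∧
      (∀ x ∈ X, x ⬝ᵥ (Smat X q)⁻¹ *ᵥ x ≤ d * (Δ x ^ 2 + ε ^ 2) / ε ^ 2) ∧
      ∑ x ∈ X, q x * Δ x ≤ ε := by
  classical
  obtain ⟨w, hw0, hw1, hpos, hbound, hobj⟩ := exists_subprob_Smat_inv_le ⟨x₀, hx₀⟩ hspan Δ hε
  set L := 1 - ∑ x ∈ X, w x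
  have hL : 0 ≤ L := sub_nonneg.2 hw1
  have hC : (L • vecMulVec x₀ x₀).PosSemidef := (posSemidef_vecMulVec_self_star x₀).smul hL
  have hS : Smat X (w + Pi.single x₀ L) = Smat X w + L • vecMulVec x₀ x₀ := by
    rw [Smat_eq_designMatrix, designMatrix_add, designMatrix_single _ _ hx₀]
    rfl
  refine ⟨w + Pi.single x₀ L, ⟨fun x hx => ?_, ?_⟩, ?_, fun x hx => ?_, ?_⟩
  · rcases eq_or_ne x x₀ with rfl | h
    · simpa using add_nonneg (hw0 x hx) hL
    · simpa [h] using hw0 x hx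
  · simp [sum_add_distrib, hx₀, L]
  · rw [hS]; exact (hpos.add_posSemidef hC).isUnit
  · rw [hS]; exact (hpos.dotProduct_inv_add_mulVec_le hC x).trans (hbound x hx)
  · simpa [add_mul, sum_add_distrib, Pi.single_apply, hx₀, hΔx₀] using hobj

theorem op_objective_bound_general {d : ℕ} (X : Finset (Fin d → ℝ))
    (hspan : Submodule.span ℝ (↑X : Set (Fin d → ℝ)) = ⊤)
    (δ : ℝ) (hδ0 : 0 < δ) (hδ1 : δ < 0.1)
    (t : ℕ) (ht : 1 ≤ t)
    (Δ : (Fin d → ℝ) → ℝ)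
    (hΔmin : ∃ x ∈ X, Δ x = 0) :
    (∃ p : (Fin d → ℝ) → ℝ, FeasibleOP X δ t Δ p) ∧
      ∀ p : (Fin d → ℝ) → ℝ, IsOPSolution X δ t Δ p →
        ∑ x ∈ X, p x * Δ x ≤ (d * betaParam X.card δ t + 1) / Real.sqrt t := by
  obtain ⟨x₀, hx₀, hΔx₀⟩ := hΔmin
  have hβ : 0 < betaParam X.card δ t :=
    betaParam_pos (card_pos.2 ⟨x₀, hx₀⟩) hδ0 (by linarith [show (0.1 : ℝ) < 1 by norm_num]) ht
  set β := betaParam X.card δ t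
  have ht0 : (0 : ℝ) < t := by exact_mod_cast ht
  set ε := √((d * β + 1) / t) with hε_def
  have hε : 0 < ε := by positivity
  have hε2 : ε ^ 2 = (d * β + 1) / t := Real.sq_sqrt (by positivity)
  obtain ⟨q, hq, hqS, hqbound, hqobj⟩ := exists_isDistOn_Smat_inv_le hspan hx₀ hΔx₀ hε
  have hfeas : FeasibleOP X δ t Δ q := by
    have hdε : (d : ℝ) / ε ^ 2 ≤ t / β := by
      rw [hε2, div_div_eq_mul_div, div_le_div_iff₀ (by positivity) hβ]
      nlinarith
    refine ⟨hq, hqS, fun x hx => (hqbound x hx).trans ?_⟩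
    calc d * (Δ x ^ 2 + ε ^ 2) / ε ^ 2 = d / ε ^ 2 * Δ x ^ 2 + d := by field_simp
      _ ≤ t / β * Δ x ^ 2 + 4 * d := by gcongr; linarith [d.cast_nonneg (α := ℝ)]
      _ = t * Δ x ^ 2 / β + 4 * d := by ring
  have hεle : ε ≤ (d * β + 1) / √t := by
    rw [hε_def, Real.sqrt_div' _ ht0.le]
    gcongr
    exact Real.sqrt_le_self_iff.2 (Or.inr (by nlinarith))
  exact ⟨⟨q, hfeas⟩, fun p hp => (hp.2 q hfeas).trans (hqobj.trans hεle)⟩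

/-- the feasible set of `OP(t, Δ̂)` is nonempty, and every solution `p` of
`OP(t, Δ̂)` satisfies `∑_x p_x Δ̂_x ≤ (d·β_t + 1)/√t`. -/
theorem op_objective_bound {d : ℕ} (X : Finset (Fin d → ℝ))
    (hspan : Submodule.span ℝ (↑X : Set (Fin d → ℝ)) = ⊤)
    (δ : ℝ) (hδ0 : 0 < δ) (hδ1 : δ < 0.1)
    (t : ℕ) (ht : 1 ≤ t)
    (Δ : (Fin d → ℝ) → ℝ) (hΔ : ∀ x ∈ X, 0 ≤ Δ x ∧ Δ x ≤ 1)
    (hΔmin : ∃ x ∈ X, Δ x = 0) :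
    (∃ p : (Fin d → ℝ) → ℝ, FeasibleOP X δ t Δ p) ∧
      ∀ p : (Fin d → ℝ) → ℝ, IsOPSolution X δ t Δ p →
        ∑ x ∈ X, p x * Δ x ≤ (d * betaParam X.card δ t + 1) / Real.sqrt t :=
  op_objective_bound_general X hspan δ hδ0 hδ1 t ht Δ hΔmin
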